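/- arXiv:2602.23813 — 2 statements merged into one kernel-verified Lean document; each statement's English description precedes it below -/
import Mathlib

section
/- For subsets S of [1, 2n+2] of cardinality n+1, defining S* = {2n+3-i : i ∈ S} and S^⊥ = [1,2n+2] \ S*, one has (S^⊥)^⊥ = S, and the signs of the associated permutations agree: sgn(σ_S) = sgn(σ_{S^⊥}). -/
/-- For `S ⊂ {1,...,2n+2}` (zero-indexed as a finset of `Fin (2n+2)`), the 1-indexed map
`i ↦ 2n+3-i` is `Fin.rev`, so `S* = S.image Fin.rev` and `S^⊥ = (S*)ᶜ`. -/
def perpSet (n : ℕ) (S : Finset (Fin (2 * n + 2))) : Finset (Fin (2 * n + 2)) :=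
  (S.image Fin.rev)ᶜ


lemma perp_sum (n : ℕ) (S : Finset (Fin (2 * n + 2))) (hS : S.card = n + 1) :
    ∑ i ∈ perpSet n S, ((i : ℕ) + 1) = ∑ i ∈ S, ((i : ℕ) + 1) := by
  have hcompl : (∑ i ∈ (S.image Fin.rev), ((i : ℕ) + 1)) +
      (∑ i ∈ perpSet n S, ((i : ℕ) + 1)) = ∑ i : Fin (2 * n + 2), ((i : ℕ) + 1) :=
    Finset.sum_add_sum_compl _ _
  have himg : ∑ i ∈ (S.image Fin.rev), ((i : ℕ) + 1) = ∑ i ∈ S, (2 * n + 2 - (i : ℕ)) := by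
    rw [Finset.sum_image (fun a _ b _ h => Fin.rev_injective h)]
    refine Finset.sum_congr rfl fun i _ => ?_
    have := i.isLt
    simp [Fin.rev]
    omega
  have huniv : ∑ i : Fin (2 * n + 2), ((i : ℕ) + 1) = (n + 1) * (2 * n + 3) := by
    rw [Fin.sum_univ_eq_sum_range (fun k => k + 1)]
    have h2 := Finset.sum_range_id_mul_two (2 * n + 2)
    have h3 : ∑ k ∈ Finset.range (2 * n + 2), (k + 1) =
        (∑ k ∈ Finset.range (2 * n + 2), k) + (2 * n + 2) := by
      rw [Finset.sum_add_distrib, Finset.sum_const, Finset.card_range, smul_eq_mul, mul_one]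
    have h4 : (2 * n + 2) * (2 * n + 2 - 1) = (2 * n + 2) * (2 * n + 1) := by congr 1
    rw [h4] at h2
    nlinarith [h2, h3]
  have hpair : (∑ i ∈ S, (2 * n + 2 - (i : ℕ))) + (∑ i ∈ S, ((i : ℕ) + 1)) =
      (n + 1) * (2 * n + 3) := by
    rw [← hS]
    rw [← Finset.sum_add_distrib, Finset.sum_congr rfl fun i _ => ?_, Finset.sum_const,
      smul_eq_mul]
    have := i.isLt; omega
  omega

lemma mem_image_rev {m : ℕ} (A : Finset (Fin m)) (x : Fin m) :
    x ∈ A.image Fin.rev ↔ x.rev ∈ A := by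
  simp only [Finset.mem_image]
  constructor
  · rintro ⟨a, ha, rfl⟩; simpa [Fin.rev_rev] using ha
  · intro h; exact ⟨x.rev, h, Fin.rev_rev x⟩

lemma perp_perp (n : ℕ) (S : Finset (Fin (2 * n + 2))) : perpSet n (perpSet n S) = S := by
  ext x
  simp only [perpSet, Finset.mem_compl, mem_image_rev, Fin.rev_rev, not_not]

/-- For subsets `S` of `{1,...,2n+2}` of cardinality `n+1`, one has
`(S^⊥)^⊥ = S`, and the signs of the associated permutations agree:
`sgn(σ_S) = sgn(σ_{S^⊥})`, where (as in the context) the sign of `σ_T` is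
`(-1)^(ΣT + ⌈(n+1)/2⌉)` (with `ΣT` the 1-indexed element sum of `T`). -/
theorem perp_involutive_and_sign_eq (n : ℕ) (hn : 0 < n) (S : Finset (Fin (2 * n + 2)))
    (hS : S.card = n + 1) :
    perpSet n (perpSet n S) = S ∧
      ((-1 : ℤˣ) ^ ((∑ i ∈ S, ((i : ℕ) + 1)) + (n + 2) / 2) =
        (-1 : ℤˣ) ^ ((∑ i ∈ perpSet n S, ((i : ℕ) + 1)) + (n + 2) / 2)) := by
  exact ⟨perp_perp n S, by rw [perp_sum n S hS]⟩
end

section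
/- Let O be a commutative ring, π ∈ O with π² = -π₀. For max{0, 2i-n} ≤ ℓ < i ≤ n, consider the free O-module with basis f₁,...,f_{2n} and the submodule F̃ generated by: f_{i+1-ℓ}, ..., f_{n-i+ℓ}, the elements f_{n-i+ℓ+m} + π f_{i-ℓ+1-m} for 1 ≤ m ≤ i-ℓ, and the elements f_{n+m} + π f_{2n+1-m} for 1 ≤ m ≤ i-ℓ (together with one extra basis vector), as in the explicit lift of the paper. Then reducing modulo π recovers the subspace spanned by f_{i+1-ℓ}, ..., f_{n+i-ℓ}; that is, the O-submodule F̃ is a free direct summand lifting the subspace F^ℓ = ⟨f_{i+1-ℓ},...,f_{n+i-ℓ}⟩ over the residue ring O/(π). -/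
/-- The 1-indexed standard basis vector `f_j` of `O^{2n}` (zero otherwise, including for
`j` out of range). -/
def stdVec (O : Type*) [CommRing O] (n j : ℕ) : Fin (2 * n) → O :=
  fun t => if (t : ℕ) + 1 = j then 1 else 0

/-- the generating set of the lift `F̃`:
`f_j` for `i+1-ℓ ≤ j ≤ n-i+ℓ`; `f_{n-i+ℓ+m} + π f_{i-ℓ+1-m}` for `1 ≤ m ≤ i-ℓ`; and
`f_{n+m} + π f_{2n+1-m}` for `1 ≤ m ≤ i-ℓ`. -/
def liftGens (O : Type*) [CommRing O] (π : O) (n i ℓ : ℕ) : Set (Fin (2 * n) → O) :=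
  (fun j => stdVec O n j) '' Set.Icc (i + 1 - ℓ) (n - i + ℓ) ∪
    (fun m => stdVec O n (n - i + ℓ + m) + π • stdVec O n (i - ℓ + 1 - m)) ''
      Set.Icc 1 (i - ℓ) ∪
    (fun m => stdVec O n (n + m) + π • stdVec O n (2 * n + 1 - m)) '' Set.Icc 1 (i - ℓ)

/-!
The generators of `F̃` are the images of the standard basis vectors `f_{k+1}, …, f_{n+k}`
(`k = i - ℓ`) under the unipotent automorphism `1 + π P`, where `P` sends `f_j` to its partner
`f_{n+1-j}` (for `n - k < j ≤ n`) or `f_{3n+1-j}` (for `n < j ≤ n + k`) and kills the other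
basis vectors. Since `2k ≤ n`, partners never have partners, so `P² = 0`. Hence `F̃` is spanned
by part of a basis of `O^{2n}`: it is a free direct summand of rank `n`, and since `1 + π P`
reduces to the identity modulo `π`, `F̃` reduces to the span of `f_{k+1}, …, f_{n+k}`.
-/

open Set Submodule

section

variable {O : Type*} [CommRing O]

lemma stdVec_zero (n : ℕ) : stdVec O n 0 = 0 := by
  ext t
  simp [stdVec]

lemma stdVec_succ (n : ℕ) (t : Fin (2 * n)) : stdVec O n (t + 1) = Pi.single t 1 := by
  ext r
  simp [stdVec, Pi.single_apply, Fin.ext_iff]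

/-- The partner of the index `j`; `0` stands for "no partner", as `stdVec O n 0 = 0`. -/
def pairedIndex (n k j : ℕ) : ℕ :=
  if n - k < j ∧ j ≤ n then n + 1 - j else if n < j ∧ j ≤ n + k then 3 * n + 1 - j else 0

lemma pairedIndex_le (n k j : ℕ) : pairedIndex n k j ≤ 2 * n := by
  unfold pairedIndex
  split_ifs <;> omega

lemma pairedIndex_pairedIndex {n k : ℕ} (hk : 2 * k ≤ n) (j : ℕ) :
    pairedIndex n k (pairedIndex n k j) = 0 := by
  unfold pairedIndex
  split_ifs <;> omega

variable (O) in
noncomputable def pairingEnd (n k : ℕ) : Module.End O (Fin (2 * n) → O) :=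
  (Pi.basisFun O (Fin (2 * n))).constr O fun t => stdVec O n (pairedIndex n k (t + 1))

lemma pairingEnd_stdVec {n k j : ℕ} (hj : j ≤ 2 * n) :
    pairingEnd O n k (stdVec O n j) = stdVec O n (pairedIndex n k j) := by
  obtain rfl | ⟨t, rfl⟩ : j = 0 ∨ ∃ t : Fin (2 * n), j = t + 1 :=
    j.eq_zero_or_eq_succ_pred.imp id fun h => ⟨⟨j - 1, by omega⟩, h⟩
  · simp [stdVec_zero, pairedIndex]
  · rw [stdVec_succ, ← Pi.basisFun_apply, pairingEnd, Module.Basis.constr_basis]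

lemma pairingEnd_mul_self {n k : ℕ} (hk : 2 * k ≤ n) :
    pairingEnd O n k * pairingEnd O n k = 0 := by
  refine (Pi.basisFun O _).ext fun t => ?_
  rw [Module.End.mul_apply, Pi.basisFun_apply, ← stdVec_succ, pairingEnd_stdVec (by omega),
    pairingEnd_stdVec (pairedIndex_le n k _), pairedIndex_pairedIndex hk, stdVec_zero,
    LinearMap.zero_apply]

def liftVec (π : O) (n k j : ℕ) : Fin (2 * n) → O :=
  stdVec O n j + π • stdVec O n (pairedIndex n k j)

lemma isUnit_one_add_smul_pairingEnd (π : O) {n k : ℕ} (hk : 2 * k ≤ n) :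
    IsUnit (1 + π • pairingEnd O n k) :=
  IsNilpotent.isUnit_one_add
    ⟨2, by rw [pow_two, smul_mul_smul_comm, pairingEnd_mul_self hk, smul_zero]⟩

noncomputable def liftBasis (π : O) (n k : ℕ) (hk : 2 * k ≤ n) :
    Module.Basis (Fin (2 * n)) O (Fin (2 * n) → O) :=
  (Pi.basisFun O _).map <|
    LinearMap.GeneralLinearGroup.generalLinearEquiv O _ (isUnit_one_add_smul_pairingEnd π hk).unit

lemma liftBasis_apply (π : O) {n k : ℕ} (hk : 2 * k ≤ n) (t : Fin (2 * n)) :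
    liftBasis π n k hk t = liftVec π n k (t + 1) := by
  rw [liftBasis, Module.Basis.map_apply, LinearMap.GeneralLinearGroup.coeFn_generalLinearEquiv,
    IsUnit.unit_spec, Pi.basisFun_apply, ← stdVec_succ, LinearMap.add_apply,
    LinearMap.smul_apply, pairingEnd_stdVec (by omega), liftVec, Module.End.one_apply]

lemma liftGens_eq_image (π : O) {n i ℓ : ℕ} (hℓi : ℓ ≤ i) (h2i : 2 * i ≤ n + ℓ) :
    liftGens O π n i ℓ = liftVec π n (i - ℓ) '' Icc (i - ℓ + 1) (n + (i - ℓ)) := by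
  rw [liftGens, show n - i + ℓ = n - (i - ℓ) by omega, show i + 1 - ℓ = i - ℓ + 1 by omega]
  set k := i - ℓ
  have hIcc : Icc (k + 1) (n + k) =
      Icc (k + 1) (n - k) ∪ (n - k + ·) '' Icc 1 k ∪ (n + ·) '' Icc 1 k := by
    rw [image_const_add_Icc, image_const_add_Icc]
    ext j
    simp only [mem_union, mem_Icc]
    omega
  rw [hIcc, image_union, image_union, image_image, image_image]
  congr 1
  congr 1
  · refine EqOn.image_eq fun j hj => ?_
    rw [mem_Icc] at hj
    rw [liftVec, pairedIndex, if_neg (by omega), if_neg (by omega), stdVec_zero, smul_zero,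
      add_zero]
  · refine EqOn.image_eq fun m hm => ?_
    rw [mem_Icc] at hm
    rw [liftVec, pairedIndex, if_pos (by omega), show n + 1 - (n - k + m) = k + 1 - m by omega]
  · refine EqOn.image_eq fun m hm => ?_
    rw [mem_Icc] at hm
    rw [liftVec, pairedIndex, if_neg (by omega), if_pos (by omega),
      show 3 * n + 1 - (n + m) = 2 * n + 1 - m by omega]

def finWindow (n k : ℕ) (hk : k ≤ n) : Fin n ↪ Fin (2 * n) :=
  (Fin.natAddEmb k).trans (Fin.castLEEmb (by omega))

lemma image_liftVec_Icc_eq_range (π : O) {n k : ℕ} (hk : 2 * k ≤ n) :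
    liftVec π n k '' Icc (k + 1) (n + k) =
      range (liftBasis π n k hk ∘ finWindow n k (by omega)) := by
  ext x
  constructor
  · rintro ⟨j, hj, rfl⟩
    rw [mem_Icc] at hj
    refine ⟨⟨j - k - 1, by omega⟩, ?_⟩
    simp only [Function.comp_apply, finWindow, Function.Embedding.trans_apply, Fin.natAddEmb_apply,
      Fin.natAdd_mk, Fin.castLEEmb_apply, Fin.castLE_mk, liftBasis_apply]
    congr 1
    omega
  · rintro ⟨j, rfl⟩
    exact ⟨k + j + 1, ⟨by omega, by omega⟩, by simp [liftBasis_apply, finWindow]⟩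

lemma map_reduce_span_image_liftVec (π : O) (n k : ℕ) (s : Set ℕ) :
    (span O (liftVec π n k '' s)).map
        (LinearMap.compLeft (Algebra.linearMap O (O ⧸ Ideal.span {π})) (Fin (2 * n))) =
      span O (stdVec (O ⧸ Ideal.span {π}) n '' s) := by
  rw [map_span, image_image]
  congr 1
  refine EqOn.image_eq fun j _ => funext fun r => ?_
  show algebraMap O _ (liftVec π n k j r) = _
  rw [liftVec, Pi.add_apply, Pi.smul_apply, smul_eq_mul, map_add, map_mul,
    Ideal.Quotient.algebraMap_eq, Ideal.Quotient.mk_singleton_self, zero_mul, add_zero]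
  unfold stdVec
  split_ifs <;> simp

end

theorem lift_is_free_summand_reducing_to_Fl_general (O : Type*) [CommRing O] [IsLocalRing O]
    (π : O)
    (n i ℓ : ℕ) (hℓi : ℓ < i) (h2i : 2 * i ≤ n + ℓ) :
    (∃ C : Submodule O (Fin (2 * n) → O),
        IsCompl (Submodule.span O (liftGens O π n i ℓ)) C) ∧
      Module.Free O ↥(Submodule.span O (liftGens O π n i ℓ)) ∧
      Module.rank O ↥(Submodule.span O (liftGens O π n i ℓ)) = n ∧
      Submodule.map
          (LinearMap.compLeft
            (Algebra.linearMap O (O ⧸ Ideal.span {π})) (Fin (2 * n)))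
          (Submodule.span O (liftGens O π n i ℓ)) =
        Submodule.span O
          ((fun j => stdVec (O ⧸ Ideal.span {π}) n j) '' Set.Icc (i + 1 - ℓ) (n + i - ℓ)) := by
  have hk : 2 * (i - ℓ) ≤ n := by omega
  have hreduce := map_reduce_span_image_liftVec π n (i - ℓ) (Icc (i - ℓ + 1) (n + (i - ℓ)))
  rw [liftGens_eq_image π hℓi.le h2i, show i + 1 - ℓ = i - ℓ + 1 by omega,
    show n + i - ℓ = n + (i - ℓ) by omega]
  rw [image_liftVec_Icc_eq_range π hk] at hreduce ⊢
  set b := liftBasis π n (i - ℓ) hk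
  set w := finWindow n (i - ℓ) (by omega)
  have hli : LinearIndependent O (b ∘ w) := b.linearIndependent.comp _ w.injective
  exact ⟨⟨_, range_comp b w ▸ b.linearIndependent.isCompl_span_image b.span_eq isCompl_compl⟩,
    .of_basis (.span hli), by rw [rank_eq_card_basis (.span hli), Fintype.card_fin], hreduce⟩

/-- Let `O` be a commutative local ring and `π` an element of its maximal
ideal.  For `max{0, 2i-n} ≤ ℓ < i ≤ n`, the submodule `F̃ ⊂ O^{2n}` spanned by the
generators above is a free direct summand of rank `n`, and its image under the
coordinatewise reduction map `O^{2n} → (O/π)^{2n}` equals the span of the basis vectors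
`f_j` for `i+1-ℓ ≤ j ≤ n+i-ℓ`. -/
theorem lift_is_free_summand_reducing_to_Fl (O : Type*) [CommRing O] [IsLocalRing O]
    (π : O) (hπ : π ∈ IsLocalRing.maximalIdeal O)
    (n i ℓ : ℕ) (hℓi : ℓ < i) (hin : i ≤ n) (h2i : 2 * i ≤ n + ℓ) :
    (∃ C : Submodule O (Fin (2 * n) → O),
        IsCompl (Submodule.span O (liftGens O π n i ℓ)) C) ∧
      Module.Free O ↥(Submodule.span O (liftGens O π n i ℓ)) ∧
      Module.rank O ↥(Submodule.span O (liftGens O π n i ℓ)) = n ∧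
      Submodule.map
          (LinearMap.compLeft
            (Algebra.linearMap O (O ⧸ Ideal.span {π})) (Fin (2 * n)))
          (Submodule.span O (liftGens O π n i ℓ)) =
        Submodule.span O
          ((fun j => stdVec (O ⧸ Ideal.span {π}) n j) '' Set.Icc (i + 1 - ℓ) (n + i - ℓ)) :=
  lift_is_free_summand_reducing_to_Fl_general O π n i ℓ hℓi h2i
end
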